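/- Let X be a random variable whose conditional distribution given b > 0 is noncentral chi-square with density f(x|b) = (1/(2b)) exp(-(x+A²)/(2b)) I₀(A√x/b), and let b follow a Gamma distribution with shape α > 0 and mean b₀ > 0, i.e., density f_b(b) = (α/b₀)^α b^{α-1} exp(-αb/b₀)/Γ(α). Then the unconditional MGF M_X(s) = E[exp(-sX)] equals ((α/b₀)^α/Γ(α)) · ∫₀^∞ (b^{α-1}/(2bs+1)) exp(-A²s/(2bs+1) - αb/b₀) db for s ≥ 0. -/

import Mathlib

/-!
Conditionally on `b`, the Laplace transform of the noncentral chi-square density is computed by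
expanding `I₀(A√x/b) = ∑ (A²x/(4b²))ᵏ/(k!)²` and integrating termwise with
`∫₀^∞ xᵏ e^{-rx} dx = k!/r^{k+1}`; the series sums to an exponential, giving
`(2bs+1)⁻¹ exp(-A²s/(2bs+1))`. All integrands are nonnegative, so by Tonelli's theorem the
unconditional transform is the integral of this expression against the Gamma density of `b`.
-/

open Real MeasureTheory Set

noncomputable def besselI0 (z : ℝ) : ℝ := ∑' k : ℕ, (z / 2) ^ (2 * k) / ((Nat.factorial k : ℝ)) ^ 2

open scoped Nat
open Function (uncurry)

section Tonelli

variable {X Y : Type*} [MeasurableSpace X] [MeasurableSpace Y] {μ : Measure X} {ν : Measure Y}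
  [SFinite μ] [SFinite ν]

theorem integral_integral_swap_of_nonneg {f : X → Y → ℝ}
    (hf : AEStronglyMeasurable (uncurry f) (μ.prod ν)) (hf_nonneg : ∀ᵐ x ∂μ, 0 ≤ᵐ[ν] f x)
    (hf_int : ∀ᵐ x ∂μ, Integrable (f x) ν) (hF_int : Integrable (fun x => ∫ y, f x y ∂ν) μ) :
    ∫ x, ∫ y, f x y ∂ν ∂μ = ∫ y, ∫ x, f x y ∂μ ∂ν := by
  refine integral_integral_swap <| (integrable_prod_iff hf).2 ⟨hf_int, hF_int.congr ?_⟩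
  filter_upwards [hf_nonneg] with x hx
  exact integral_congr_ae <| hx.mono fun y hy => (norm_of_nonneg hy).symm

end Tonelli

lemma integral_pow_mul_exp_neg_mul_Ioi {r : ℝ} (hr : 0 < r) (k : ℕ) :
    ∫ x in Ioi (0 : ℝ), x ^ k * exp (-(r * x)) = k ! / r ^ (k + 1) := by
  have h := integral_rpow_mul_exp_neg_mul_Ioi (a := k + 1) (by positivity) hr
  rw [add_sub_cancel_right, Gamma_nat_eq_factorial] at h
  simp only [rpow_natCast] at h
  rw [h, ← Nat.cast_succ, rpow_natCast, Nat.succ_eq_add_one]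
  ring

lemma integrableOn_pow_mul_exp_neg_mul_Ioi {r : ℝ} (hr : 0 < r) (k : ℕ) :
    IntegrableOn (fun x : ℝ => x ^ k * exp (-(r * x))) (Ioi 0) := by
  simpa [neg_mul] using integrableOn_rpow_mul_exp_neg_mul_rpow (s := k) (p := 1)
    (by linarith [k.cast_nonneg (α := ℝ)]) one_pos hr

lemma summable_pow_div_factorial_sq {t : ℝ} (ht : 0 ≤ t) :
    Summable fun k : ℕ => t ^ k / (k ! : ℝ) ^ 2 := by
  refine (summable_pow_div_factorial t).of_nonneg_of_le (fun k => by positivity) fun k => ?_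
  have hk : (1 : ℝ) ≤ k ! := by exact_mod_cast k.factorial_pos
  exact div_le_div_of_nonneg_left (by positivity) (by positivity) (by nlinarith)

lemma besselI0_eq_tsum (z : ℝ) : besselI0 z = ∑' k : ℕ, (z ^ 2 / 4) ^ k / (k ! : ℝ) ^ 2 := by
  refine tsum_congr fun k => ?_
  rw [pow_mul]
  ring

lemma besselI0_nonneg (z : ℝ) : 0 ≤ besselI0 z := by
  rw [besselI0_eq_tsum]
  exact tsum_nonneg fun k => by positivity

@[fun_prop]
lemma measurable_besselI0 : Measurable besselI0 := by
  refine measurable_of_tendsto_metrizable' Filter.atTop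
    (f := fun n z => ∑ k ∈ Finset.range n, (z ^ 2 / 4) ^ k / (k ! : ℝ) ^ 2) (fun n => by fun_prop)
    (tendsto_pi_nhds.2 fun z => ?_)
  rw [besselI0_eq_tsum]
  exact (summable_pow_div_factorial_sq (by positivity)).hasSum.tendsto_sum_nat

lemma exp_neg_mul_mul_besselI0_mul_sqrt_eq_tsum (r β : ℝ) {x : ℝ} (hx : 0 ≤ x) :
    exp (-(r * x)) * besselI0 (β * √x)
      = ∑' k : ℕ, (β ^ 2 / 4) ^ k / (k ! : ℝ) ^ 2 * (x ^ k * exp (-(r * x))) := by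
  rw [besselI0_eq_tsum, ← tsum_mul_left]
  refine tsum_congr fun k => ?_
  rw [mul_pow, sq_sqrt hx]
  ring

lemma integral_exp_neg_mul_mul_besselI0_mul_sqrt {r : ℝ} (hr : 0 < r) (β : ℝ) :
    ∫ x in Ioi (0 : ℝ), exp (-(r * x)) * besselI0 (β * √x) = exp (β ^ 2 / (4 * r)) / r := by
  set F : ℕ → ℝ → ℝ := fun k x => (β ^ 2 / 4) ^ k / (k ! : ℝ) ^ 2 * (x ^ k * exp (-(r * x)))
  have hF_int : ∀ k, IntegrableOn (F k) (Ioi 0) := fun k =>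
    (integrableOn_pow_mul_exp_neg_mul_Ioi hr k).const_mul _
  have hF_integral : ∀ k, ∫ x in Ioi (0 : ℝ), F k x = (β ^ 2 / (4 * r)) ^ k / k ! / r := by
    intro k
    rw [integral_const_mul, integral_pow_mul_exp_neg_mul_Ioi hr k, div_pow, div_pow, mul_pow]
    field_simp
    ring
  have hF_norm : ∀ k, ∫ x in Ioi (0 : ℝ), ‖F k x‖ = ∫ x in Ioi (0 : ℝ), F k x := fun k =>
    setIntegral_congr_fun measurableSet_Ioi fun x (hx : 0 < x) => norm_of_nonneg (by positivity)
  have hF_sum : Summable fun k => ∫ x in Ioi (0 : ℝ), ‖F k x‖ := by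
    simpa only [hF_norm, hF_integral] using (summable_pow_div_factorial _).div_const r
  calc ∫ x in Ioi (0 : ℝ), exp (-(r * x)) * besselI0 (β * √x)
      = ∫ x in Ioi (0 : ℝ), ∑' k, F k x :=
        setIntegral_congr_fun measurableSet_Ioi fun x (hx : 0 < x) =>
          exp_neg_mul_mul_besselI0_mul_sqrt_eq_tsum r β hx.le
    _ = ∑' k, (β ^ 2 / (4 * r)) ^ k / k ! / r := by
        rw [← integral_tsum_of_summable_integral_norm hF_int hF_sum]
        exact tsum_congr hF_integral
    _ = exp (β ^ 2 / (4 * r)) / r := by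
        rw [tsum_div_const, exp_eq_exp_ℝ, NormedSpace.exp_eq_tsum_div]

lemma integrableOn_exp_neg_mul_mul_besselI0_mul_sqrt {r : ℝ} (hr : 0 < r) (β : ℝ) :
    IntegrableOn (fun x => exp (-(r * x)) * besselI0 (β * √x)) (Ioi 0) :=
  Integrable.of_integral_ne_zero <| by
    rw [integral_exp_neg_mul_mul_besselI0_mul_sqrt hr β]
    positivity

namespace HomodynedK

noncomputable def noncentralChiSqDensity (A b x : ℝ) : ℝ :=
  1 / (2 * b) * exp (-(x + A ^ 2) / (2 * b)) * besselI0 (A * √x / b)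

noncomputable def noncentralChiSqMGF (A b s : ℝ) : ℝ :=
  1 / (2 * b * s + 1) * exp (-(A ^ 2 * s) / (2 * b * s + 1))

noncomputable def gammaDensity (α b₀ b : ℝ) : ℝ :=
  (α / b₀) ^ α * b ^ (α - 1) * exp (-α * b / b₀) / Gamma α

lemma noncentralChiSqDensity_nonneg (A : ℝ) {b : ℝ} (hb : 0 < b) (x : ℝ) :
    0 ≤ noncentralChiSqDensity A b x := by
  have := besselI0_nonneg (A * √x / b)
  unfold noncentralChiSqDensity
  positivity

lemma exp_neg_mul_mul_noncentralChiSqDensity (A : ℝ) {b : ℝ} (hb : b ≠ 0) (s x : ℝ) :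
    exp (-s * x) * noncentralChiSqDensity A b x
      = 1 / (2 * b) * exp (-A ^ 2 / (2 * b))
        * (exp (-((2 * b * s + 1) / (2 * b) * x)) * besselI0 (A / b * √x)) := by
  have hexp : exp (-s * x) * exp (-(x + A ^ 2) / (2 * b))
      = exp (-A ^ 2 / (2 * b)) * exp (-((2 * b * s + 1) / (2 * b) * x)) := by
    rw [← exp_add, ← exp_add]
    congr 1
    field_simp
    ring
  unfold noncentralChiSqDensity
  rw [mul_div_right_comm]
  linear_combination 1 / (2 * b) * besselI0 (A / b * √x) * hexp

lemma integrableOn_exp_neg_mul_mul_noncentralChiSqDensity (A : ℝ) {b s : ℝ} (hb : 0 < b)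
    (hbs : 0 < 2 * b * s + 1) :
    IntegrableOn (fun x => exp (-s * x) * noncentralChiSqDensity A b x) (Ioi 0) := by
  simp_rw [exp_neg_mul_mul_noncentralChiSqDensity A hb.ne']
  exact (integrableOn_exp_neg_mul_mul_besselI0_mul_sqrt (by positivity) _).const_mul _

lemma integral_exp_neg_mul_mul_noncentralChiSqDensity (A : ℝ) {b s : ℝ} (hb : 0 < b)
    (hbs : 0 < 2 * b * s + 1) :
    ∫ x in Ioi (0 : ℝ), exp (-s * x) * noncentralChiSqDensity A b x = noncentralChiSqMGF A b s := by
  have hexp : -A ^ 2 / (2 * b) + (A / b) ^ 2 / (4 * ((2 * b * s + 1) / (2 * b)))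
      = -(A ^ 2 * s) / (2 * b * s + 1) := by
    field_simp
    ring
  simp_rw [exp_neg_mul_mul_noncentralChiSqDensity A hb.ne']
  rw [integral_const_mul, integral_exp_neg_mul_mul_besselI0_mul_sqrt (by positivity),
    mul_div_assoc', mul_assoc, ← exp_add, hexp, noncentralChiSqMGF]
  field_simp

lemma norm_noncentralChiSqMGF_le_one (A : ℝ) {b s : ℝ} (hb : 0 < b) (hs : 0 ≤ s) :
    ‖noncentralChiSqMGF A b s‖ ≤ 1 := by
  have hbs : 1 ≤ 2 * b * s + 1 := by nlinarith
  rw [noncentralChiSqMGF, norm_of_nonneg (by positivity)]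
  refine mul_le_one₀ (div_le_one_of_le₀ hbs (by positivity)) (by positivity) (exp_le_one_iff.2 ?_)
  exact div_nonpos_of_nonpos_of_nonneg (neg_nonpos.2 (by positivity)) (by positivity)

lemma gammaDensity_nonneg {α b₀ b : ℝ} (hα : 0 < α) (hb₀ : 0 < b₀) (hb : 0 < b) :
    0 ≤ gammaDensity α b₀ b := by
  unfold gammaDensity
  positivity

lemma integrableOn_gammaDensity {α b₀ : ℝ} (hα : 0 < α) (hb₀ : 0 < b₀) :
    IntegrableOn (gammaDensity α b₀) (Ioi 0) := by
  have h := (integrableOn_rpow_mul_exp_neg_mul_rpow (s := α - 1) (p := 1) (by linarith) one_pos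
    (div_pos hα hb₀)).const_mul ((α / b₀) ^ α / Gamma α)
  refine IntegrableOn.congr_fun h (fun b _ => ?_) measurableSet_Ioi
  rw [gammaDensity, rpow_one, show -α * b / b₀ = -(α / b₀) * b by ring]
  ring

lemma integral_exp_neg_mul_integral_gammaDensity_mul_noncentralChiSqDensity (A : ℝ)
    {α b₀ s : ℝ} (hα : 0 < α) (hb₀ : 0 < b₀) (hs : 0 ≤ s) :
    ∫ x in Ioi (0 : ℝ), exp (-s * x) *
        ∫ b in Ioi (0 : ℝ), gammaDensity α b₀ b * noncentralChiSqDensity A b x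
      = ∫ b in Ioi (0 : ℝ), gammaDensity α b₀ b * noncentralChiSqMGF A b s := by
  have h_inner : ∀ b ∈ Ioi (0 : ℝ), ∫ x in Ioi (0 : ℝ),
      exp (-s * x) * (gammaDensity α b₀ b * noncentralChiSqDensity A b x)
        = gammaDensity α b₀ b * noncentralChiSqMGF A b s := fun b (hb : 0 < b) => by
    simp_rw [mul_left_comm (exp _), integral_const_mul]
    rw [integral_exp_neg_mul_mul_noncentralChiSqDensity A hb (by positivity)]
  have h_outer : IntegrableOn (fun b => gammaDensity α b₀ b * noncentralChiSqMGF A b s) (Ioi 0) :=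
    (integrableOn_gammaDensity hα hb₀).mul_bdd (by unfold noncentralChiSqMGF; fun_prop) <|
      (ae_restrict_mem measurableSet_Ioi).mono fun b hb => norm_noncentralChiSqMGF_le_one A hb hs
  simp_rw [← integral_const_mul]
  rw [← setIntegral_congr_fun measurableSet_Ioi h_inner]
  refine (integral_integral_swap_of_nonneg ?_ ?_ ?_
    (h_outer.congr_fun (fun b hb => (h_inner b hb).symm) measurableSet_Ioi)).symm
  · exact Measurable.aestronglyMeasurable <| by
      unfold gammaDensity noncentralChiSqDensity
      fun_prop
  · filter_upwards [ae_restrict_mem measurableSet_Ioi] with b hb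
    exact Filter.Eventually.of_forall fun x => mul_nonneg (exp_nonneg _)
      (mul_nonneg (gammaDensity_nonneg hα hb₀ hb) (noncentralChiSqDensity_nonneg A hb x))
  · filter_upwards [ae_restrict_mem measurableSet_Ioi] with b (hb : 0 < b)
    simp_rw [mul_left_comm (exp _)]
    exact (integrableOn_exp_neg_mul_mul_noncentralChiSqDensity A hb (by positivity)).const_mul _

end HomodynedK

open HomodynedK in
theorem stmt_2_general (α b₀ A s : ℝ) (hα : 0 < α) (hb₀ : 0 < b₀) (hs : 0 ≤ s) :
    (∫ x in Ioi (0 : ℝ), Real.exp (-s * x) *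
        ∫ b in Ioi (0 : ℝ),
          ((α / b₀) ^ α * b ^ (α - 1) * Real.exp (-α * b / b₀) / Real.Gamma α) *
            ((1 / (2 * b)) * Real.exp (-(x + A ^ 2) / (2 * b)) *
              besselI0 (A * Real.sqrt x / b))) =
      ((α / b₀) ^ α / Real.Gamma α) *
        ∫ b in Ioi (0 : ℝ),
          (b ^ (α - 1) / (2 * b * s + 1)) *
            Real.exp (-(A ^ 2 * s) / (2 * b * s + 1) - α * b / b₀) := by
  refine (integral_exp_neg_mul_integral_gammaDensity_mul_noncentralChiSqDensity A hα hb₀ hs).trans ?_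
  rw [← integral_const_mul]
  congr with b
  rw [gammaDensity, noncentralChiSqMGF, exp_sub, neg_mul, neg_div, exp_neg]
  ring

/-- MGF of the H-K distribution: if, conditionally on `b`, `X` has noncentral chi-square
density `(1/(2b)) exp(-(x+A²)/(2b)) I₀(A√x/b)` and `b` is Gamma distributed with shape `α`
and mean `b₀`, then
`E[e^{-sX}] = ((α/b₀)^α/Γ(α)) ∫₀^∞ (b^{α-1}/(2bs+1)) exp(-A²s/(2bs+1) - αb/b₀) db`. -/
theorem stmt_2 (α b₀ A s : ℝ) (hα : 0 < α) (hb₀ : 0 < b₀) (hA : 0 ≤ A) (hs : 0 ≤ s) :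
    (∫ x in Ioi (0 : ℝ), Real.exp (-s * x) *
        ∫ b in Ioi (0 : ℝ),
          ((α / b₀) ^ α * b ^ (α - 1) * Real.exp (-α * b / b₀) / Real.Gamma α) *
            ((1 / (2 * b)) * Real.exp (-(x + A ^ 2) / (2 * b)) *
              besselI0 (A * Real.sqrt x / b))) =
      ((α / b₀) ^ α / Real.Gamma α) *
        ∫ b in Ioi (0 : ℝ),
          (b ^ (α - 1) / (2 * b * s + 1)) *
            Real.exp (-(A ^ 2 * s) / (2 * b * s + 1) - α * b / b₀) :=
  stmt_2_general α b₀ A s hα hb₀ hs
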